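/- Suppose S∘E = O∘T and Ŝ∘E = Ô∘T - L̂∘T̄ as operator identities between complex inner product spaces, where E is self-adjoint (E† = E = E*, both with respect to the bilinear and sesquilinear pairings), Ô is self-adjoint with respect to the sesquilinear pairing (Ô* = Ô), and L̂ is self-adjoint with respect to the bilinear pairing (L̂† = L̂). If φ = T(G), φ̄ = T̄(G) for some G with E(G) = 0, and Ô(φ) - L̂(φ̄) = 0, then E(Ŝ*φ + Ŝ†φ̄) = T*(Ô φ - L̂ φ̄) + T†(Ô̄ φ̄ - L̂̄ φ), so the real part Ŝ*φ + Ŝ†φ̄ lies in the kernel of E. -/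
import Mathlib


open scoped InnerProductSpace
open ComplexConjugate

/-- Abstract form of the sixth order symmetry operator construction from the TSI
(Theorem 4.3).  Given operator identities `S∘E = O∘T` and `Ŝ∘E = Ô∘T - L̂∘T̄` with `E`
self-adjoint and real, `Ô` sesquilinearly (`⋆`-)self-adjoint and `L̂` bilinearly
(`†`-)self-adjoint, if `φ = T G`, `φ̄ = T̄ G` with `E G = 0` and `Ô φ - L̂ φ̄ = 0` (TSI),
then `E (Ŝ*φ + Ŝ†φ̄) = T*(Ôφ - L̂φ̄) + T†(Ō φ̄ - L̄ φ)`, and hence the real part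
`Ŝ*φ + Ŝ†φ̄` lies in the kernel of `E`.  Here conjugations are implemented by `J_V`, `J_W`,
`A† w = J (A* (J w))`, and bars denote conjugated operators `Ā = J ∘ A ∘ J`. -/
theorem tsi_sixth_order_symmetry_operator
    {V W : Type*}
    [NormedAddCommGroup V] [InnerProductSpace ℂ V] [FiniteDimensional ℂ V]
    [NormedAddCommGroup W] [InnerProductSpace ℂ W] [FiniteDimensional ℂ W]
    (JV : V →ₗ⋆[ℂ] V) (JW : W →ₗ⋆[ℂ] W)
    (hJV : ∀ v, JV (JV v) = v) (hJW : ∀ w, JW (JW w) = w)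
    (hJVinner : ∀ x y : V, ⟪JV x, JV y⟫_ℂ = conj ⟪x, y⟫_ℂ)
    (hJWinner : ∀ x y : W, ⟪JW x, JW y⟫_ℂ = conj ⟪x, y⟫_ℂ)
    (E : V →ₗ[ℂ] V) (T Tbar S Shat : V →ₗ[ℂ] W) (O Ohat Lhat : W →ₗ[ℂ] W)
    (hTbar : ∀ v, Tbar v = JW (T (JV v)))
    (hSE : S ∘ₗ E = O ∘ₗ T)
    (hShatE : Shat ∘ₗ E = Ohat ∘ₗ T - Lhat ∘ₗ Tbar)
    (hEsa : LinearMap.adjoint E = E)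
    (hEreal : ∀ v, E (JV v) = JV (E v))
    (hOhatsa : LinearMap.adjoint Ohat = Ohat)
    (hLhatdag : ∀ x y : W, ⟪Lhat x, JW y⟫_ℂ = ⟪x, JW (Lhat y)⟫_ℂ)
    (G : V) (hG : E G = 0)
    (φ φbar : W) (hφ : φ = T G) (hφbar : φbar = Tbar G)
    (hTSI : Ohat φ - Lhat φbar = 0) :
    E (LinearMap.adjoint Shat φ + JV (LinearMap.adjoint Shat (JW φbar)))
      = LinearMap.adjoint T (Ohat φ - Lhat φbar)
        + JV (LinearMap.adjoint T
            (JW (JW (Ohat (JW φbar)) - JW (Lhat (JW φ)))))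
      ∧ E (LinearMap.adjoint Shat φ + JV (LinearMap.adjoint Shat (JW φbar))) = 0 := by

  -- pointwise form of the operator identity
  have hShatE' : ∀ v, Shat (E v) = Ohat (T v) - Lhat (Tbar v) := by
    intro v
    have := LinearMap.congr_fun hShatE v
    simpa using this
  -- swap lemma for JV in the inner product
  have hJVswap : ∀ a v : V, ⟪JV a, v⟫_ℂ = conj ⟪a, JV v⟫_ℂ := by
    intro a v
    rw [← hJVinner a (JV v), hJV v]
  -- key identity: E (Shat* w) = T* (Ohat w) - JV (T* (Lhat (JW w)))
  have key : ∀ w : W, E (LinearMap.adjoint Shat w)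
      = LinearMap.adjoint T (Ohat w)
        - JV (LinearMap.adjoint T (Lhat (JW w))) := by
    intro w
    apply ext_inner_right ℂ
    intro v
    rw [inner_sub_left]
    have h1 : ⟪E (LinearMap.adjoint Shat w), v⟫_ℂ = ⟪w, Shat (E v)⟫_ℂ := by
      conv_lhs => rw [← hEsa]
      rw [LinearMap.adjoint_inner_left, LinearMap.adjoint_inner_left]
    have h2 : ⟪LinearMap.adjoint T (Ohat w), v⟫_ℂ = ⟪w, Ohat (T v)⟫_ℂ := by
      rw [LinearMap.adjoint_inner_left]
      conv_lhs => rw [← hOhatsa]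
      rw [LinearMap.adjoint_inner_left]
    have h3 : ⟪JV (LinearMap.adjoint T (Lhat (JW w))), v⟫_ℂ
        = ⟪w, Lhat (Tbar v)⟫_ℂ := by
      have hTJ : T (JV v) = JW (Tbar v) := by rw [hTbar, hJW]
      rw [hJVswap, LinearMap.adjoint_inner_left, hTJ, hLhatdag, hJWinner]
      simp
    rw [h1, h2, h3, hShatE', inner_sub_right]
  -- conjugate TSI
  have hTSI2 : Ohat (JW φbar) - Lhat (JW φ) = 0 := by
    have h := hShatE' (JV G)
    rw [hEreal, hG, map_zero, map_zero] at h
    have hT : T (JV G) = JW φbar := by rw [hφbar, hTbar, hJW]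
    have hTb : Tbar (JV G) = JW φ := by rw [hTbar, hJV G, ← hφ]
    rw [hT, hTb] at h
    exact h.symm
  have mainEq : E (LinearMap.adjoint Shat φ + JV (LinearMap.adjoint Shat (JW φbar)))
      = LinearMap.adjoint T (Ohat φ - Lhat φbar)
        + JV (LinearMap.adjoint T
            (JW (JW (Ohat (JW φbar)) - JW (Lhat (JW φ))))) := by
    rw [map_add, key φ, hEreal, key (JW φbar)]
    simp only [hJW, map_sub, hJV]
    abel
  refine ⟨mainEq, ?_⟩
  rw [mainEq, hTSI]
  have h2 : JW (JW (Ohat (JW φbar)) - JW (Lhat (JW φ))) = 0 := by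
    rw [← map_sub JW, hJW, hTSI2]
  rw [h2]
  simp
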